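/- Let V be a k×k nonnegative irreducible symmetric real matrix and z ∈ (0,∞)^k with ρ(V·D[z_j]) > 1. Then there exists a unique y ∈ (0,∞)^k with ρ(V·D[y_j]) < 1 satisfying y_j·exp(-(V y)_j) = z_j·exp(-(V z)_j) for all j; moreover y_i < z_i for all i. -/

import Mathlib

/-- Spectral radius of a real matrix: supremum of the absolute values of its
complex eigenvalues. -/
noncomputable def rho {k : ℕ} (M : Matrix (Fin k) (Fin k) ℝ) : ℝ :=
  sSup {r : ℝ | ∃ μ ∈ spectrum ℂ (M.map (algebraMap ℝ ℂ)), r = ‖μ‖}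

/-- A matrix is irreducible if its associated directed graph is strongly
connected. -/
def IsIrred {k : ℕ} (M : Matrix (Fin k) (Fin k) ℝ) : Prop :=
  ∀ S : Finset (Fin k), S.Nonempty → S ≠ Finset.univ → ∃ i ∈ S, ∃ j ∈ Sᶜ, M i j ≠ 0

/-!
The solutions are the positive fixed points of the monotone map `G y = c ∘ exp (V y)` with
`c = z ∘ exp (-V z)`, and the solution `Y` is the least fixed point of `G`, obtained by
Tarski's argument on the order interval `[0, z]`.

Everything is controlled by the Perron vector `v > 0` of `V D[y]` at a positive fixed point `y`.
It exists because `V D[y]` is similar to the symmetric matrix `D[√y] V D[√y]`, and its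
eigenvalue is `ρ(V D[y])` because, `V` being symmetric, `y ∘ v` is a positive left eigenvector.
If `ρ(V D[z]) > 1`, then `z - ε z ∘ v` is a supersolution strictly below `z`, so `Y < z`.
Two fixed points `a ≤ b` satisfy `b = a ∘ exp (V (b - a))`, hence
`a ∘ V (b - a) ≤ b - a ≤ b ∘ V (b - a)`; pairing with the Perron vectors of `V D[a]` and `V D[b]`
gives `ρ(V D[a]) < 1` when `a < b` (strict convexity of `exp`) and `a = b` when `ρ(V D[b]) < 1`.
-/

open Matrix Real Finset

theorem exists_fixedPoint_isLeast {α : Type*} [ConditionallyCompleteLattice α] {f : α → α}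
    (hf : Monotone f) {a b : α} (hab : a ≤ b) (ha : a ≤ f a) (hb : f b ≤ b) :
    ∃ y, f y = y ∧ IsLeast {w | a ≤ w ∧ f w ≤ w} y := by
  set S := {w | a ≤ w ∧ w ≤ b ∧ f w ≤ w}
  have hbS : b ∈ S := ⟨hab, le_rfl, hb⟩
  have hle : ∀ w ∈ S, sInf S ≤ w := fun w hw => csInf_le ⟨a, fun w hw => hw.1⟩ hw
  have hay : a ≤ sInf S := le_csInf ⟨b, hbS⟩ fun w hw => hw.1
  have hfy : f (sInf S) ≤ sInf S := le_csInf ⟨b, hbS⟩ fun w hw => (hf (hle w hw)).trans hw.2.2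
  have hyfy : sInf S ≤ f (sInf S) := hle _ ⟨ha.trans (hf hay), hfy.trans (hle b hbS), hf hfy⟩
  refine ⟨sInf S, hfy.antisymm hyfy, ⟨hay, hfy⟩, fun w ⟨haw, hfw⟩ => ?_⟩
  have hwb : f (w ⊓ b) ≤ w ⊓ b :=
    le_inf ((hf inf_le_left).trans hfw) ((hf inf_le_right).trans hb)
  exact (hle _ ⟨le_inf haw hab, inf_le_right, hwb⟩).trans inf_le_left

theorem exp_neg_mul_le_one_sub {r s : ℝ} (hr : 0 < r) (hs : 0 ≤ s) (hrs : r * s ≤ r - 1) :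
    exp (-(r * s)) ≤ 1 - s := by
  have hs1 : 0 ≤ 1 - s := by nlinarith
  have h : 1 ≤ (1 - s) * exp (r * s) := calc
    1 ≤ (1 - s) * (r * s + 1) := by nlinarith
    _ ≤ (1 - s) * exp (r * s) := mul_le_mul_of_nonneg_left (add_one_le_exp _) hs1
  rwa [exp_neg, inv_le_iff_one_le_mul₀ (exp_pos _)]

theorem sub_le_mul_of_eq_mul_exp {a b t : ℝ} (hb : 0 ≤ b) (h : b = a * exp t) :
    b - a ≤ b * t := by
  have ha : a = b * exp (-t) := by
    rw [h, mul_assoc, ← exp_add, add_neg_cancel, exp_zero, mul_one]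
  nlinarith [add_one_le_exp (-t)]

theorem mul_lt_sub_of_eq_mul_exp {a b t : ℝ} (ha : 0 < a) (hab : a ≠ b) (h : b = a * exp t) :
    a * t < b - a := by
  have ht : t ≠ 0 := by rintro rfl; simp [h] at hab
  nlinarith [add_one_lt_exp ht]

theorem Matrix.mul_diagonal_mulVec {α ι : Type*} [NonUnitalSemiring α] [Fintype ι]
    [DecidableEq ι] (V : Matrix ι ι α) (y v : ι → α) :
    (V * diagonal y) *ᵥ v = V *ᵥ (y * v) := by
  rw [← mulVec_mulVec]
  exact congr_arg _ (funext (mulVec_diagonal y v))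

theorem Matrix.IsSymm.dotProduct_mulVec_eq_of_mul_diagonal_mulVec_eq_smul {ι : Type*}
    [Fintype ι] [DecidableEq ι] {V : Matrix ι ι ℝ} (hV : V.IsSymm) {y v : ι → ℝ} {r : ℝ}
    (hv : (V * diagonal y) *ᵥ v = r • v) (h : ι → ℝ) :
    (y * v) ⬝ᵥ (V *ᵥ h) = r * (v ⬝ᵥ h) := by
  rw [dotProduct_mulVec, ← mulVec_transpose, hV.eq, ← mul_diagonal_mulVec, hv, smul_dotProduct,
    smul_eq_mul]

theorem Matrix.mem_spectrum_iff_exists_mulVec_eq_smul {K ι : Type*} [Field K] [Fintype ι]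
    [DecidableEq ι] {A : Matrix ι ι K} {μ : K} :
    μ ∈ spectrum K A ↔ ∃ v ≠ 0, A *ᵥ v = μ • v := by
  rw [← spectrum_toLin', ← Module.End.hasEigenvalue_iff_mem_spectrum]
  constructor
  · intro h
    obtain ⟨v, hv⟩ := h.exists_hasEigenvector
    exact ⟨v, hv.2, Module.End.mem_eigenspace_iff.mp hv.1⟩
  · rintro ⟨v, hv, h⟩
    exact Module.End.hasEigenvalue_of_hasEigenvector ⟨Module.End.mem_eigenspace_iff.mpr h, hv⟩

theorem abs_dotProduct_mulVec_le {ι : Type*} [Fintype ι] {B : Matrix ι ι ℝ}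
    (hnn : ∀ i j, 0 ≤ B i j) (x : ι → ℝ) : |x ⬝ᵥ B *ᵥ x| ≤ |x| ⬝ᵥ B *ᵥ |x| := by
  simp only [dotProduct, mulVec, mul_sum]
  refine (abs_sum_le_sum_abs _ _).trans (sum_le_sum fun i _ => ?_)
  refine (abs_sum_le_sum_abs _ _).trans (sum_le_sum fun j _ => ?_)
  simp [abs_mul, abs_of_nonneg (hnn i j)]

theorem Matrix.IsHermitian.exists_nonneg_mulVec_eq_smul {ι : Type*} [Fintype ι] [DecidableEq ι]
    [Nonempty ι] {B : Matrix ι ι ℝ} (hB : B.IsHermitian) (hnn : ∀ i j, 0 ≤ B i j) :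
    ∃ x, 0 ≤ x ∧ x ≠ 0 ∧ ∃ r : ℝ, B *ᵥ x = r • x := by
  obtain ⟨i, -, hi⟩ := exists_mem_eq_sup' univ_nonempty hB.eigenvalues
  set r := hB.eigenvalues i
  set u : ι → ℝ := ⇑(hB.eigenvectorBasis i)
  have hu : u ⬝ᵥ u = 1 := by
    have h := inner_self_eq_one_of_norm_eq_one (𝕜 := ℝ) (hB.eigenvectorBasis.orthonormal.1 i)
    rwa [EuclideanSpace.inner_eq_star_dotProduct, star_trivial] at h
  have hBu : B *ᵥ u = r • u := hB.mulVec_eigenvectorBasis i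
  have hrB : ∀ x, (algebraMap ℝ _ r - B) *ᵥ x = r • x - B *ᵥ x := fun x => by
    rw [sub_mulVec, Algebra.algebraMap_eq_smul_one, smul_mulVec, one_mulVec]
  -- `|u|` attains the top eigenvalue `r` as Rayleigh quotient, so it lies in the kernel of the
  -- positive semidefinite matrix `r - B`
  have hpsd : (algebraMap ℝ _ r - B).PosSemidef := by
    refine posSemidef_iff_isHermitian_and_spectrum_nonneg.mpr ⟨?_, ?_⟩
    · exact IsHermitian.sub (by simp [Algebra.algebraMap_eq_smul_one]) hB
    · rw [← spectrum.singleton_sub_eq, hB.spectrum_real_eq_range_eigenvalues]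
      rintro _ ⟨_, rfl, _, ⟨j, rfl⟩, rfl⟩
      simpa [hi] using le_sup' hB.eigenvalues (mem_univ j)
  have hq : |u| ⬝ᵥ (algebraMap ℝ _ r - B) *ᵥ |u| ≤ 0 := by
    have : r ≤ |u| ⬝ᵥ B *ᵥ |u| := calc
      r = u ⬝ᵥ B *ᵥ u := by rw [hBu, dotProduct_smul, hu, smul_eq_mul, mul_one]
      _ ≤ |u ⬝ᵥ B *ᵥ u| := le_abs_self _
      _ ≤ |u| ⬝ᵥ B *ᵥ |u| := abs_dotProduct_mulVec_le hnn u
    have hu' : |u| ⬝ᵥ |u| = 1 := by simpa [dotProduct, ← abs_mul] using hu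
    rw [hrB, dotProduct_sub, dotProduct_smul, hu', smul_eq_mul, mul_one]
    linarith
  refine ⟨|u|, abs_nonneg u, ?_, r, ?_⟩
  · intro h
    simp [(Pi.abs_eq_zero u).mp h] at hu
  · have h0 := le_antisymm hq (by simpa using hpsd.dotProduct_mulVec_nonneg |u|)
    have := (hpsd.dotProduct_mulVec_zero_iff |u|).mp (by simpa using h0)
    rw [hrB, sub_eq_zero] at this
    exact this.symm

theorem norm_le_of_mem_spectrum_of_vecMul_eq_smul {ι : Type*} [Fintype ι] [DecidableEq ι]
    {M : Matrix ι ι ℝ} (hnn : ∀ i j, 0 ≤ M i j) {p : ι → ℝ} (hp : ∀ i, 0 < p i) {r : ℝ}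
    (hpM : p ᵥ* M = r • p) {μ : ℂ} (hμ : μ ∈ spectrum ℂ (M.map (algebraMap ℝ ℂ))) :
    ‖μ‖ ≤ r := by
  obtain ⟨w, hw0, hw⟩ := mem_spectrum_iff_exists_mulVec_eq_smul.mp hμ
  set a : ι → ℝ := fun j => ‖w j‖
  have ha : 0 ≤ a := fun j => norm_nonneg _
  have hMa : ‖μ‖ • a ≤ M *ᵥ a := fun j => calc
    ‖μ‖ * ‖w j‖ = ‖∑ l, (M j l : ℂ) * w l‖ := by
      rw [← norm_mul, ← smul_eq_mul, ← Pi.smul_apply, ← hw]; rfl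
    _ ≤ ∑ l, ‖(M j l : ℂ) * w l‖ := norm_sum_le _ _
    _ = (M *ᵥ a) j := by simp [mulVec, dotProduct, a, abs_of_nonneg (hnn _ _)]
  have hpa : 0 < p ⬝ᵥ a := by
    obtain ⟨j, hj⟩ := Function.ne_iff.mp hw0
    exact sum_pos' (fun i _ => mul_nonneg (hp i).le (ha i))
      ⟨j, mem_univ j, mul_pos (hp j) (norm_pos_iff.mpr hj)⟩
  have : ‖μ‖ * (p ⬝ᵥ a) ≤ r * (p ⬝ᵥ a) := calc
    ‖μ‖ * (p ⬝ᵥ a) = p ⬝ᵥ (‖μ‖ • a) := by rw [dotProduct_smul, smul_eq_mul]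
    _ ≤ p ⬝ᵥ (M *ᵥ a) := dotProduct_le_dotProduct_of_nonneg_left hMa fun i => (hp i).le
    _ = r * (p ⬝ᵥ a) := by rw [dotProduct_mulVec, hpM, smul_dotProduct, smul_eq_mul]
  exact le_of_mul_le_mul_right this hpa

theorem rho_eq_of_vecMul_eq_smul_of_mulVec_eq_smul {k : ℕ} {M : Matrix (Fin k) (Fin k) ℝ}
    (hnn : ∀ i j, 0 ≤ M i j) {p : Fin k → ℝ} (hp : ∀ i, 0 < p i) {r : ℝ}
    (hpM : p ᵥ* M = r • p) {x : Fin k → ℝ} (hx : x ≠ 0) (hMx : M *ᵥ x = r • x) :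
    rho M = r := by
  have hr : (r : ℂ) ∈ spectrum ℂ (M.map (algebraMap ℝ ℂ)) := by
    refine mem_spectrum_iff_exists_mulVec_eq_smul.mpr ⟨fun i => x i, ?_, ?_⟩
    · simpa [funext_iff] using hx
    · ext i
      simpa [mulVec, dotProduct] using congr_arg Complex.ofReal (congr_fun hMx i)
  have hr0 : ‖(r : ℂ)‖ = r := by
    have := norm_le_of_mem_spectrum_of_vecMul_eq_smul hnn hp hpM hr
    rw [Complex.norm_real, Real.norm_eq_abs] at *
    exact abs_eq_self.mpr ((abs_nonneg r).trans this)
  refine IsGreatest.csSup_eq ⟨⟨r, hr, hr0.symm⟩, ?_⟩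
  rintro _ ⟨μ, hμ, rfl⟩
  exact norm_le_of_mem_spectrum_of_vecMul_eq_smul hnn hp hpM hμ

theorem rho_eq_zero_of_isEmpty {k : ℕ} [IsEmpty (Fin k)] (M : Matrix (Fin k) (Fin k) ℝ) :
    rho M = 0 := by
  simp [rho, spectrum.of_subsingleton]

theorem IsIrred.mul_diagonal {k : ℕ} {V : Matrix (Fin k) (Fin k) ℝ} (hV : IsIrred V)
    {y : Fin k → ℝ} (hy : ∀ i, y i ≠ 0) : IsIrred (V * diagonal y) := by
  intro S hS hSu
  obtain ⟨i, hi, j, hj, hij⟩ := hV S hS hSu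
  exact ⟨i, hi, j, hj, by simp [hij, hy j]⟩

theorem IsIrred.pos_of_mulVec_eq_smul {k : ℕ} {M : Matrix (Fin k) (Fin k) ℝ} (hM : IsIrred M)
    (hnn : ∀ i j, 0 ≤ M i j) {x : Fin k → ℝ} (hx : 0 ≤ x) (hx0 : x ≠ 0) {r : ℝ}
    (h : M *ᵥ x = r • x) : ∀ i, 0 < x i := by
  by_contra! hneg
  obtain ⟨i₀, hi₀⟩ := hneg
  set S := univ.filter (fun i => x i = 0)
  have hSne : S.Nonempty := ⟨i₀, by simp [S, le_antisymm hi₀ (hx i₀)]⟩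
  have hSu : S ≠ univ := fun hS => hx0 <| funext fun i => by
    simpa [S] using (hS ▸ mem_univ i : i ∈ S)
  -- an edge from the zero set of `x` to its support forces `(M x) i > 0 = r x i`
  obtain ⟨i, hi, j, hj, hij⟩ := hM S hSne hSu
  simp only [S, mem_compl, mem_filter, mem_univ, true_and] at hi hj
  have hpos : 0 < (M *ᵥ x) i := calc
    0 < M i j * x j := mul_pos ((hnn i j).lt_of_ne' hij) ((hx j).lt_of_ne' hj)
    _ ≤ ∑ l, M i l * x l := single_le_sum (f := fun l => M i l * x l)
      (fun l _ => mul_nonneg (hnn i l) (hx l)) (mem_univ j)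
  simp [h, hi] at hpos

theorem exists_pos_mulVec_mul_diagonal_eq_rho_smul {k : ℕ} [Nonempty (Fin k)]
    {V : Matrix (Fin k) (Fin k) ℝ} (hnn : ∀ i j, 0 ≤ V i j) (hV : V.IsSymm) (hirr : IsIrred V)
    {y : Fin k → ℝ} (hy : ∀ i, 0 < y i) :
    ∃ v : Fin k → ℝ, (∀ i, 0 < v i) ∧ (V * diagonal y) *ᵥ v = rho (V * diagonal y) • v := by
  set s : Fin k → ℝ := fun i => √(y i)
  have hs : ∀ i, 0 < s i := fun i => sqrt_pos.mpr (hy i)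
  set B := diagonal s * V * diagonal s
  have hB : B.IsHermitian := by
    simp only [isHermitian_iff_isSymm, IsSymm, B, transpose_mul, diagonal_transpose, hV.eq,
      mul_assoc]
  have hBnn : ∀ i j, 0 ≤ B i j := fun i j => by
    simpa [B, mul_diagonal, diagonal_mul] using
      mul_nonneg (mul_nonneg (hs i).le (hnn i j)) (hs j).le
  obtain ⟨x, hx0, hx, r, hBx⟩ := hB.exists_nonneg_mulVec_eq_smul hBnn
  set v := x / s
  have hyv : y * v = s * x := funext fun i => by
    have := hs i
    simp only [Pi.mul_apply, Pi.div_apply, v, s] at this ⊢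
    field_simp
    rw [sq_sqrt (hy i).le, mul_comm]
  have hVyv : V *ᵥ (y * v) = r • v := funext fun i => by
    have h := congr_fun hBx i
    rw [mul_diagonal_mulVec, ← mulVec_mulVec, mulVec_diagonal, Pi.smul_apply, smul_eq_mul] at h
    rw [hyv, Pi.smul_apply, smul_eq_mul, show v i = x i / s i from rfl, mul_div_assoc',
      eq_div_iff (hs i).ne']
    linarith
  have hMv : (V * diagonal y) *ᵥ v = r • v := by rw [mul_diagonal_mulVec, hVyv]
  have hMnn : ∀ i j, 0 ≤ (V * diagonal y) i j := fun i j => by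
    simpa [mul_diagonal] using mul_nonneg (hnn i j) (hy j).le
  have hv0 : 0 ≤ v := fun i => div_nonneg (hx0 i) (hs i).le
  have hv : v ≠ 0 := fun h => hx <| funext fun i => by
    simpa [v, (hs i).ne'] using congr_fun h i
  have hvpos : ∀ i, 0 < v i :=
    (hirr.mul_diagonal fun i => (hy i).ne').pos_of_mulVec_eq_smul hMnn hv0 hv hMv
  have hvM : (y * v) ᵥ* (V * diagonal y) = r • (y * v) := funext fun i => by
    rw [← vecMul_vecMul, ← mulVec_transpose V, hV.eq, hVyv, vecMul_diagonal]
    simp only [Pi.smul_apply, Pi.mul_apply, smul_eq_mul]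
    ring
  rw [rho_eq_of_vecMul_eq_smul_of_mulVec_eq_smul hMnn (fun i => mul_pos (hy i) (hvpos i)) hvM hv
    hMv]
  exact ⟨v, hvpos, hMv⟩

noncomputable def lambertMap {ι : Type*} [Fintype ι] (V : Matrix ι ι ℝ) (c y : ι → ℝ) :
    ι → ℝ :=
  fun j => c j * exp ((V *ᵥ y) j)

section LambertMap

variable {ι : Type*} [Fintype ι] {V : Matrix ι ι ℝ} {c : ι → ℝ}

theorem lambertMap_monotone (hnn : ∀ i j, 0 ≤ V i j) (hc : 0 ≤ c) :
    Monotone (lambertMap V c) := fun _ _ hab j =>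
  mul_le_mul_of_nonneg_left (exp_le_exp.mpr <| sum_le_sum fun l _ =>
    mul_le_mul_of_nonneg_left (hab l) (hnn j l)) (hc j)

theorem lambertMap_pos (hc : ∀ j, 0 < c j) (y : ι → ℝ) (j : ι) : 0 < lambertMap V c y j :=
  mul_pos (hc j) (exp_pos _)

theorem lambertMap_eq_self_iff {y : ι → ℝ} :
    lambertMap V c y = y ↔ ∀ j, y j * exp (-(V *ᵥ y) j) = c j := by
  simp only [funext_iff, lambertMap]
  refine forall_congr' fun j => ?_
  rw [exp_neg, ← div_eq_mul_inv, div_eq_iff (exp_pos _).ne', eq_comm]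

theorem eq_mul_exp_of_lambertMap_eq_self {a b : ι → ℝ} (ha : lambertMap V c a = a)
    (hb : lambertMap V c b = b) (j : ι) : b j = a j * exp ((V *ᵥ (b - a)) j) := calc
  b j = c j * exp ((V *ᵥ a) j) * exp ((V *ᵥ (b - a)) j) := by
    rw [mulVec_sub, Pi.sub_apply, mul_assoc, ← exp_add, add_sub_cancel, ← congr_fun hb j]
    rfl
  _ = a j * exp ((V *ᵥ (b - a)) j) := by rw [← congr_fun ha j]; rfl

end LambertMap

section FixedPoints

variable {k : ℕ} [Nonempty (Fin k)] {V : Matrix (Fin k) (Fin k) ℝ} {c : Fin k → ℝ}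

theorem exists_lt_of_lambertMap_eq_self_of_one_lt_rho (hnn : ∀ i j, 0 ≤ V i j) (hV : V.IsSymm)
    (hirr : IsIrred V) {y : Fin k → ℝ} (hy : ∀ i, 0 < y i) (hfix : lambertMap V c y = y)
    (hρ : 1 < rho (V * diagonal y)) :
    ∃ w, 0 ≤ w ∧ lambertMap V c w ≤ w ∧ ∀ j, w j < y j := by
  obtain ⟨v, hv, hMv⟩ := exists_pos_mulVec_mul_diagonal_eq_rho_smul hnn hV hirr hy
  set ρ := rho (V * diagonal y)
  have hρ0 : 0 < ρ := one_pos.trans hρ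
  set ε := (1 - ρ⁻¹) / ∑ i, v i
  have hεv : ∀ j, 0 < ε * v j ∧ ρ * (ε * v j) ≤ ρ - 1 := fun j => by
    have hvj : v j ≤ ∑ i, v i := single_le_sum (fun i _ => (hv i).le) (mem_univ j)
    have hsum : 0 < ∑ i, v i := (hv j).trans_le hvj
    have h1 : 0 < 1 - ρ⁻¹ := sub_pos.2 (inv_lt_one_of_one_lt₀ hρ)
    refine ⟨mul_pos (div_pos h1 hsum) (hv j), ?_⟩
    have : ε * v j ≤ 1 - ρ⁻¹ := by
      rw [div_mul_eq_mul_div, div_le_iff₀ hsum]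
      exact mul_le_mul_of_nonneg_left hvj h1.le
    calc ρ * (ε * v j) ≤ ρ * (1 - ρ⁻¹) := mul_le_mul_of_nonneg_left this hρ0.le
      _ = ρ - 1 := by field_simp
  set w := y - ε • (y * v)
  have hw : ∀ j, w j = y j * (1 - ε * v j) := fun j => by simp [w]; ring
  have hVw : V *ᵥ w = V *ᵥ y - (ε * ρ) • v := by
    rw [mulVec_sub, mulVec_smul, ← mul_diagonal_mulVec, hMv, smul_smul]
  refine ⟨w, fun j => ?_, fun j => ?_, fun j => ?_⟩
  · show 0 ≤ w j
    rw [hw]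
    exact mul_nonneg (hy j).le (by nlinarith [hεv j])
  · calc lambertMap V c w j = lambertMap V c y j * exp (-(ρ * (ε * v j))) := by
          simp only [lambertMap, hVw, Pi.sub_apply, Pi.smul_apply, smul_eq_mul, sub_eq_add_neg,
            exp_add, mul_assoc]
          ring_nf
      _ ≤ y j * (1 - ε * v j) := by
          rw [congr_fun hfix j]
          exact mul_le_mul_of_nonneg_left (exp_neg_mul_le_one_sub hρ0 (hεv j).1.le (hεv j).2)
            (hy j).le
      _ = w j := (hw j).symm
  · rw [hw]
    exact mul_lt_of_lt_one_right (hy j) (by linarith [(hεv j).1])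

theorem rho_lt_one_of_lambertMap_eq_self_of_lt (hnn : ∀ i j, 0 ≤ V i j) (hV : V.IsSymm)
    (hirr : IsIrred V) {a b : Fin k → ℝ} (ha : ∀ j, 0 < a j) (hfa : lambertMap V c a = a)
    (hfb : lambertMap V c b = b) (hab : ∀ j, a j < b j) : rho (V * diagonal a) < 1 := by
  obtain ⟨v, hv, hMv⟩ := exists_pos_mulVec_mul_diagonal_eq_rho_smul hnn hV hirr ha
  have hpos : 0 < v ⬝ᵥ (b - a) :=
    sum_pos (fun j _ => mul_pos (hv j) (sub_pos.2 (hab j))) univ_nonempty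
  have hlt : rho (V * diagonal a) * (v ⬝ᵥ (b - a)) < v ⬝ᵥ (b - a) := calc
    _ = (a * v) ⬝ᵥ (V *ᵥ (b - a)) :=
      (hV.dotProduct_mulVec_eq_of_mul_diagonal_mulVec_eq_smul hMv _).symm
    _ < v ⬝ᵥ (b - a) := sum_lt_sum_of_nonempty univ_nonempty fun j _ => by
      have := mul_lt_sub_of_eq_mul_exp (ha j) (hab j).ne
        (eq_mul_exp_of_lambertMap_eq_self hfa hfb j)
      simpa [mul_comm, mul_left_comm, mul_assoc] using mul_lt_mul_of_pos_left this (hv j)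
  exact (mul_lt_iff_lt_one_left hpos).mp hlt

theorem eq_of_lambertMap_eq_self_of_le (hnn : ∀ i j, 0 ≤ V i j) (hV : V.IsSymm)
    (hirr : IsIrred V) {a b : Fin k → ℝ} (hb : ∀ j, 0 < b j) (hfa : lambertMap V c a = a)
    (hfb : lambertMap V c b = b) (hab : a ≤ b) (hρ : rho (V * diagonal b) < 1) : a = b := by
  obtain ⟨v, hv, hMv⟩ := exists_pos_mulVec_mul_diagonal_eq_rho_smul hnn hV hirr hb
  have hle : v ⬝ᵥ (b - a) ≤ rho (V * diagonal b) * (v ⬝ᵥ (b - a)) := calc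
    v ⬝ᵥ (b - a) ≤ (b * v) ⬝ᵥ (V *ᵥ (b - a)) := sum_le_sum fun j _ => by
      have := sub_le_mul_of_eq_mul_exp (hb j).le (eq_mul_exp_of_lambertMap_eq_self hfa hfb j)
      simpa [mul_comm, mul_left_comm, mul_assoc] using mul_le_mul_of_nonneg_left this (hv j).le
    _ = _ := hV.dotProduct_mulVec_eq_of_mul_diagonal_mulVec_eq_smul hMv _
  by_contra hne
  obtain ⟨j, hj⟩ := Function.ne_iff.mp hne
  have hpos : 0 < v ⬝ᵥ (b - a) :=
    sum_pos' (fun i _ => mul_nonneg (hv i).le (sub_nonneg.2 (hab i)))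
      ⟨j, mem_univ j, mul_pos (hv j) (sub_pos.2 ((hab j).lt_of_ne hj))⟩
  nlinarith

end FixedPoints

theorem unique_min_solution_in_R0 {k : ℕ} (V : Matrix (Fin k) (Fin k) ℝ)
    (hnn : ∀ i j, 0 ≤ V i j) (hsym : ∀ i j, V i j = V j i) (hirr : IsIrred V)
    (z : Fin k → ℝ) (hz : ∀ i, 0 < z i) (hρz : 1 < rho (V * Matrix.diagonal z)) :
    (∃! y : Fin k → ℝ, (∀ i, 0 < y i) ∧ rho (V * Matrix.diagonal y) < 1 ∧
        ∀ j, y j * Real.exp (-(V.mulVec y j)) = z j * Real.exp (-(V.mulVec z j))) ∧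
      ∀ y : Fin k → ℝ, ((∀ i, 0 < y i) ∧ rho (V * Matrix.diagonal y) < 1 ∧
        ∀ j, y j * Real.exp (-(V.mulVec y j)) = z j * Real.exp (-(V.mulVec z j))) →
        ∀ i, y i < z i := by
  have : Nonempty (Fin k) := by
    by_contra h
    rw [not_nonempty_iff] at h
    norm_num [rho_eq_zero_of_isEmpty] at hρz
  have hV : V.IsSymm := IsSymm.ext fun i j => hsym j i
  set c : Fin k → ℝ := fun j => z j * exp (-(V *ᵥ z) j)
  have hc : ∀ j, 0 < c j := fun j => mul_pos (hz j) (exp_pos _)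
  have hzfix : lambertMap V c z = z := lambertMap_eq_self_iff.mpr fun _ => rfl
  obtain ⟨Y, hYfix, -, hYmin⟩ :=
    exists_fixedPoint_isLeast (lambertMap_monotone hnn fun j => (hc j).le) (fun j => (hz j).le)
      (fun j => (lambertMap_pos hc 0 j).le) hzfix.le
  have hYpos : ∀ j, 0 < Y j := fun j => hYfix ▸ lambertMap_pos hc Y j
  have hYz : ∀ j, Y j < z j := by
    obtain ⟨w, hw0, hGw, hwz⟩ :=
      exists_lt_of_lambertMap_eq_self_of_one_lt_rho hnn hV hirr hz hzfix hρz
    exact fun j => (hYmin ⟨hw0, hGw⟩ j).trans_lt (hwz j)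
  have huniq : ∀ y : Fin k → ℝ, ((∀ i, 0 < y i) ∧ rho (V * diagonal y) < 1 ∧
      ∀ j, y j * exp (-(V *ᵥ y) j) = c j) → y = Y := by
    rintro y ⟨hy, hρy, hyc⟩
    have hyfix := lambertMap_eq_self_iff.mpr hyc
    exact (eq_of_lambertMap_eq_self_of_le hnn hV hirr hy hYfix hyfix
      (hYmin ⟨fun i => (hy i).le, hyfix.le⟩) hρy).symm
  refine ⟨⟨Y, ⟨hYpos, rho_lt_one_of_lambertMap_eq_self_of_lt hnn hV hirr hYpos hYfix hzfix hYz,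
    lambertMap_eq_self_iff.mp hYfix⟩, huniq⟩, fun y hy i => ?_⟩
  rw [huniq y hy]
  exact hYz i
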